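/- Let β ∈ ℝ, let ħ : [0,1] → ℝ be nonnegative and integrable with ∫₀¹ φ(p) ħ(p) dp > 0, let φ : [0,1] → ℝ be increasing and absolutely continuous with φ(0) = 0, and let ϖ > β φ(1) − ∫₀¹ φ(p) ħ(p) dp. Then there exist infinitely many absolutely continuous functions Q : [0,1] → ℝ with Q(1) = β, 0 ≤ Q' ≤ ħ a.e., and ∫₀¹ Q(p) φ'(p) dp ≤ ϖ; for instance, for every t in a nondegenerate subinterval of [0,1] containing 1, the function Qₜ(p) := β − t ∫ₚ¹ ħ(s) ds is feasible. -/
import Mathlib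


open MeasureTheory Set

/-- A function `Q` is absolutely continuous on `[0,1]` with a.e. derivative `Q'`,
encoded via the fundamental theorem of calculus representation. -/
def AbsContOn01 (Q Q' : ℝ → ℝ) : Prop :=
  MeasureTheory.IntegrableOn Q' (Set.Icc 0 1) ∧
    ∀ p ∈ Set.Icc (0 : ℝ) 1, Q p = Q 0 + ∫ t in (0 : ℝ)..p, Q' t

/-- `Q` is feasible for the constrained quantile problem with data `(β, hbar, φ', ϖ)`. -/
def Feasible (β ϖ : ℝ) (hbar φ' : ℝ → ℝ) (Q : ℝ → ℝ) : Prop :=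
  ∃ Q' : ℝ → ℝ, AbsContOn01 Q Q' ∧ Q 1 = β ∧
    (∀ᵐ p ∂(MeasureTheory.volume.restrict (Set.Icc (0 : ℝ) 1)),
      0 ≤ Q' p ∧ Q' p ≤ hbar p) ∧
    (∫ p in Set.Icc (0 : ℝ) 1, Q p * φ' p) ≤ ϖ

/-- **Strict feasibility**: when `ϖ` strictly exceeds the minimal attainable budget
`βφ(1) - ∫₀¹ φ hbar`, there are infinitely many feasible quantiles; in particular all
functions `Qₜ(p) = β - t ∫ₚ¹ hbar` for `t` in a nondegenerate subinterval of `[0,1]`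
containing `1` are feasible. -/
theorem strict_feasibility_infinitely_many
    (β : ℝ) (hbar : ℝ → ℝ) (hbar0 : ∀ p ∈ Set.Icc (0 : ℝ) 1, 0 ≤ hbar p)
    (hbarint : MeasureTheory.IntegrableOn hbar (Set.Icc 0 1))
    (φ φ' : ℝ → ℝ) (hφmono : MonotoneOn φ (Set.Icc 0 1))
    (hφAC : AbsContOn01 φ φ') (hφ0 : φ 0 = 0)
    (hpos : 0 < ∫ p in Set.Icc (0 : ℝ) 1, φ p * hbar p)
    (ϖ : ℝ) (hϖ : β * φ 1 - (∫ p in Set.Icc (0 : ℝ) 1, φ p * hbar p) < ϖ) :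
    {Q : ℝ → ℝ | Feasible β ϖ hbar φ' Q}.Infinite ∧
    ∃ t₀ : ℝ, 0 ≤ t₀ ∧ t₀ < 1 ∧
      ∀ t ∈ Set.Icc t₀ 1,
        Feasible β ϖ hbar φ' (fun p => β - t * ∫ s in p..(1 : ℝ), hbar s) := by
  classical
  have hmeas : MeasurableSet (Icc (0 : ℝ) 1) := measurableSet_Icc
  set I : ℝ := ∫ p in Set.Icc (0 : ℝ) 1, φ p * hbar p with hIdef
  set F : ℝ → ℝ := fun p => ∫ s in p..(1 : ℝ), hbar s with hFdef
  -- basic interval integrability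
  have hbarII : IntervalIntegrable hbar volume 0 1 :=
    (intervalIntegrable_iff_integrableOn_Icc_of_le zero_le_one).mpr hbarint
  have hbarIIp : ∀ p ∈ Icc (0 : ℝ) 1, IntervalIntegrable hbar volume 0 p := by
    intro p hp
    refine hbarII.mono_set ?_
    rw [uIcc_of_le hp.1, uIcc_of_le zero_le_one]
    exact Icc_subset_Icc le_rfl hp.2
  have hφ'II : IntervalIntegrable φ' volume 0 1 :=
    (intervalIntegrable_iff_integrableOn_Icc_of_le zero_le_one).mpr hφAC.1
  have hφ'int : Integrable φ' (volume.restrict (Icc (0 : ℝ) 1)) := hφAC.1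
  have hbarint' : Integrable hbar (volume.restrict (Icc (0 : ℝ) 1)) := hbarint
  -- FTC representation of φ
  have hφrep : ∀ p ∈ Icc (0 : ℝ) 1, φ p = ∫ t in (0 : ℝ)..p, φ' t := by
    intro p hp
    rw [hφAC.2 p hp, hφ0, zero_add]
  have hφ1 : (∫ p in Icc (0 : ℝ) 1, φ' p) = φ 1 := by
    rw [hφrep 1 (by constructor <;> norm_num),
      intervalIntegral.integral_of_le zero_le_one, integral_Icc_eq_integral_Ioc]
  -- F on [0,1]
  have hFsub : ∀ p ∈ Icc (0 : ℝ) 1,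
      F p = (∫ s in (0 : ℝ)..1, hbar s) - ∫ s in (0 : ℝ)..p, hbar s := by
    intro p hp
    exact (intervalIntegral.integral_interval_sub_left hbarII (hbarIIp p hp)).symm
  have hFcont : ContinuousOn F (Icc (0 : ℝ) 1) := by
    have := intervalIntegral.continuousOn_primitive_interval_left
      (f := hbar) (μ := volume) (a := 0) (b := 1)
      (by rw [uIcc_of_le zero_le_one]; exact hbarint)
    rwa [uIcc_of_le zero_le_one] at this
  obtain ⟨C, hC⟩ := isCompact_Icc.exists_bound_of_continuousOn hFcont
  have hFbd : ∀ᵐ p ∂(volume.restrict (Icc (0 : ℝ) 1)), ‖F p‖ ≤ C :=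
    ae_restrict_of_forall_mem hmeas hC
  have hFmeasAE : AEStronglyMeasurable F (volume.restrict (Icc (0 : ℝ) 1)) :=
    hFcont.aestronglyMeasurable hmeas
  have hFφ'int : Integrable (fun p => F p * φ' p) (volume.restrict (Icc (0 : ℝ) 1)) :=
    hφ'int.bdd_mul hFmeasAE hFbd
  -- Key identity (integration by parts via Fubini): ∫ F·φ' = ∫ φ·hbar
  have key : (∫ p in Icc (0 : ℝ) 1, F p * φ' p) = I := by
    set μ := volume.restrict (Icc (0 : ℝ) 1) with hμ
    set g : ℝ × ℝ → ℝ :=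
      ({z : ℝ × ℝ | z.1 < z.2}).indicator (fun z => φ' z.1 * hbar z.2) with hg
    have hSmeas : MeasurableSet {z : ℝ × ℝ | z.1 < z.2} :=
      (isOpen_lt continuous_fst continuous_snd).measurableSet
    have hhint : Integrable (fun z : ℝ × ℝ => φ' z.1 * hbar z.2) (μ.prod μ) :=
      hφ'int.mul_prod hbarint'
    have hgint : Integrable g (μ.prod μ) := hhint.indicator hSmeas
    have hswap : (∫ p, (∫ s, g (p, s) ∂μ) ∂μ) = ∫ s, (∫ p, g (p, s) ∂μ) ∂μ :=
      integral_integral_swap hgint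
    have inner1 : ∀ p ∈ Icc (0 : ℝ) 1, (∫ s, g (p, s) ∂μ) = F p * φ' p := by
      intro p hp
      have h1 : (fun s => g (p, s)) = (Ioi p).indicator (fun s => φ' p * hbar s) := by
        funext s
        simp only [hg, Set.indicator_apply, Set.mem_setOf_eq, Set.mem_Ioi]
      rw [h1, integral_indicator measurableSet_Ioi, hμ,
        Measure.restrict_restrict measurableSet_Ioi]
      have h2 : Ioi p ∩ Icc (0 : ℝ) 1 = Ioc p 1 := by
        ext x
        simp only [mem_inter_iff, mem_Ioi, mem_Icc, mem_Ioc]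
        constructor
        · rintro ⟨h, _, h2⟩; exact ⟨h, h2⟩
        · rintro ⟨h, h2⟩; exact ⟨h, le_trans hp.1 h.le, h2⟩
      rw [h2, MeasureTheory.integral_const_mul,
        ← intervalIntegral.integral_of_le hp.2]
      exact mul_comm _ _
    have inner2 : ∀ s ∈ Icc (0 : ℝ) 1, (∫ p, g (p, s) ∂μ) = φ s * hbar s := by
      intro s hs
      have h1 : (fun p => g (p, s)) = (Iio s).indicator (fun p => φ' p * hbar s) := by
        funext p
        simp only [hg, Set.indicator_apply, Set.mem_setOf_eq, Set.mem_Iio]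
      rw [h1, integral_indicator measurableSet_Iio, hμ,
        Measure.restrict_restrict measurableSet_Iio]
      have h2 : Iio s ∩ Icc (0 : ℝ) 1 = Ico 0 s := by
        ext x
        simp only [mem_inter_iff, mem_Iio, mem_Icc, mem_Ico]
        constructor
        · rintro ⟨h, h1, _⟩; exact ⟨h1, h⟩
        · rintro ⟨h1, h⟩; exact ⟨h, h1, le_trans h.le hs.2⟩
      rw [h2, MeasureTheory.integral_mul_const, integral_Ico_eq_integral_Ioo,
        ← integral_Ioc_eq_integral_Ioo,
        ← intervalIntegral.integral_of_le hs.1, ← hφrep s hs]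
    calc (∫ p in Icc (0 : ℝ) 1, F p * φ' p)
        = ∫ p, (∫ s, g (p, s) ∂μ) ∂μ :=
          (setIntegral_congr_fun hmeas (fun p hp => inner1 p hp)).symm
      _ = ∫ s, (∫ p, g (p, s) ∂μ) ∂μ := hswap
      _ = I := setIntegral_congr_fun hmeas (fun s hs => inner2 s hs)
  -- Budget of Q_t
  have hbudget : ∀ t : ℝ,
      (∫ p in Icc (0 : ℝ) 1, (β - t * F p) * φ' p) = β * φ 1 - t * I := by
    intro t
    have h1 : (fun p => (β - t * F p) * φ' p)
        = fun p => β * φ' p - t * (F p * φ' p) := by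
      funext p; ring
    rw [h1, integral_sub (hφ'int.const_mul β) (hFφ'int.const_mul t),
      MeasureTheory.integral_const_mul, MeasureTheory.integral_const_mul, hφ1, key]
  -- Feasibility of Q_t
  have feas : ∀ t : ℝ, 0 ≤ t → t ≤ 1 → β * φ 1 - t * I ≤ ϖ →
      Feasible β ϖ hbar φ' (fun p => β - t * F p) := by
    intro t ht0 ht1 hbud
    refine ⟨fun p => t * hbar p, ⟨hbarint.const_mul t, ?_⟩, ?_, ?_, ?_⟩
    · intro p hp
      have h1 : (∫ s in (0 : ℝ)..p, t * hbar s) = t * ∫ s in (0 : ℝ)..p, hbar s :=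
        intervalIntegral.integral_const_mul t hbar
      have h2 := hFsub p hp
      have h3 := hFsub 0 (by constructor <;> norm_num)
      rw [intervalIntegral.integral_same, sub_zero] at h3
      show β - t * F p = β - t * F 0 + ∫ s in (0 : ℝ)..p, t * hbar s
      rw [h1, h2, h3]; ring
    · show β - t * F 1 = β
      have : F 1 = 0 := intervalIntegral.integral_same
      rw [this]; ring
    · refine ae_restrict_of_forall_mem hmeas fun p hp => ?_
      exact ⟨mul_nonneg ht0 (hbar0 p hp), mul_le_of_le_one_left (hbar0 p hp) ht1⟩
    · calc (∫ p in Icc (0 : ℝ) 1, (β - t * F p) * φ' p)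
          = β * φ 1 - t * I := hbudget t
        _ ≤ ϖ := hbud
  -- choose t₀
  have hIpos : 0 < I := hpos
  set t₀ : ℝ := max ((β * φ 1 - ϖ) / I) 0 with ht₀def
  have ht₀0 : 0 ≤ t₀ := le_max_right _ _
  have ht₀1 : t₀ < 1 :=
    max_lt ((div_lt_one hIpos).mpr (by linarith)) one_pos
  have hbudall : ∀ t ∈ Icc t₀ 1, β * φ 1 - t * I ≤ ϖ := by
    intro t ht
    have h1 : (β * φ 1 - ϖ) / I ≤ t := le_trans (le_max_left _ _) ht.1
    rw [div_le_iff₀ hIpos] at h1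
    linarith
  have feas' : ∀ t ∈ Icc t₀ 1, Feasible β ϖ hbar φ' (fun p => β - t * F p) :=
    fun t ht => feas t (le_trans ht₀0 ht.1) ht.2 (hbudall t ht)
  constructor
  · -- infinitude
    have hF0pos : 0 < F 0 := by
      have hInt0 : 0 < ∫ s in Icc (0 : ℝ) 1, hbar s := by
        rcases lt_or_ge 0 (∫ s in Icc (0 : ℝ) 1, hbar s) with h | h
        · exact h
        · exfalso
          have hnn : 0 ≤ ∫ s in Icc (0 : ℝ) 1, hbar s :=
            setIntegral_nonneg hmeas hbar0
          have hz : (∫ s in Icc (0 : ℝ) 1, hbar s) = 0 := le_antisymm h hnn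
          have hbarae : 0 ≤ᵐ[volume.restrict (Icc (0 : ℝ) 1)] hbar :=
            ae_restrict_of_forall_mem hmeas hbar0
          have hae0 : hbar =ᵐ[volume.restrict (Icc (0 : ℝ) 1)] 0 :=
            (integral_eq_zero_iff_of_nonneg_ae hbarae hbarint').mp hz
          have hprod0 : (fun p => φ p * hbar p)
              =ᵐ[volume.restrict (Icc (0 : ℝ) 1)] 0 := by
            filter_upwards [hae0] with p hp
            simp [hp]
          have := integral_congr_ae hprod0
          simp only [Pi.zero_apply, integral_zero] at this
          rw [hIdef] at hIpos
          exact absurd this (by linarith)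
      have : F 0 = ∫ s in Icc (0 : ℝ) 1, hbar s := by
        rw [hFdef]
        simp only
        rw [intervalIntegral.integral_of_le zero_le_one, integral_Icc_eq_integral_Ioc]
      rw [this]; exact hInt0
    have hinj : Set.InjOn (fun t : ℝ => (fun p => β - t * F p)) (Icc t₀ 1) := by
      intro a _ b _ hab
      have := congrFun hab 0
      simp only at this
      have h2 : a * F 0 = b * F 0 := by linarith
      exact mul_right_cancel₀ (ne_of_gt hF0pos) h2
    have hsub : (fun t : ℝ => (fun p => β - t * F p)) '' Icc t₀ 1
        ⊆ {Q : ℝ → ℝ | Feasible β ϖ hbar φ' Q} := by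
      rintro Q ⟨t, ht, rfl⟩
      exact feas' t ht
    exact ((Set.Icc_infinite ht₀1).image hinj).mono hsub
  · exact ⟨t₀, ht₀0, ht₀1, feas'⟩
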